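/- arXiv:1912.00924 — 6 statements merged into one kernel-verified Lean document; each statement's English description precedes it below -/
import Mathlib

section
/- Let X be a second countable Hausdorff locally compact abelian group with Pontryagin dual Y, and let μ be a probability measure on X. Put E = {y ∈ Y : μ̂(y) = 1}. Then: (a) E is a closed subgroup of Y (closed under addition and negation, containing 0, and closed as a subset of Y); (b) μ̂(y + h) = μ̂(y) for all y ∈ Y and all h ∈ E; (c) μ assigns full measure to the annihilator A(X,E) = {x ∈ X : y(x) = 1 for all y ∈ E}, i.e. μ(A(X,E)) = 1. -/
/-!
If `μ̂(y) = 1`, then `Re (1 - y)` is a nonnegative function with integral zero, and as `|y| = 1`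
this forces `y = 1` `μ`-a.e. So `E` is the set of characters that are `μ`-a.e. trivial: a subgroup
on which `μ̂` is invariant, closed because `μ̂` is continuous (dominated convergence). As `Y` is
second countable, `E` has a countable dense subset `D`; off the union of the countably many null
sets attached to `D`, a point is killed by every character of `D`, hence by every character of `E`.
-/

open MeasureTheory Complex

noncomputable section

/-- The Pontryagin dual of an additive topological abelian group `X`:
continuous characters `X → Circle`, written multiplicatively via `Multiplicative X`,
carrying the compact-open topology. -/
abbrev DualGroup (X : Type*) [AddCommGroup X] [TopologicalSpace X] : Type _ :=
  PontryaginDual (Multiplicative X)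

/-- The characteristic function (Fourier transform) of a measure `μ` on `X`. -/
def charFun' {X : Type*} [AddCommGroup X] [TopologicalSpace X] [MeasurableSpace X]
    (μ : Measure X) (y : DualGroup X) : ℂ :=
  ∫ x, (y (Multiplicative.ofAdd x) : ℂ) ∂μ

open ComplexConjugate

open scoped ComplexOrder in
theorem Complex.eq_one_of_re_eq_one_of_norm_le_one {z : ℂ} (hre : z.re = 1) (hnorm : ‖z‖ ≤ 1) :
    z = 1 := by
  have hnonneg : 0 ≤ z := re_eq_norm.1 (le_antisymm (re_le_norm z) (hnorm.trans hre.ge))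
  exact Complex.ext hre (nonneg_iff.1 hnonneg).2.symm

theorem integral_eq_one_iff_ae_eq_one {α : Type*} [MeasurableSpace α] {μ : Measure α}
    [IsProbabilityMeasure μ] {f : α → ℂ} (hf : AEStronglyMeasurable f μ)
    (hf_le : ∀ᵐ a ∂μ, ‖f a‖ ≤ 1) : ∫ a, f a ∂μ = 1 ↔ ∀ᵐ a ∂μ, f a = 1 := by
  refine ⟨fun h ↦ ?_, fun h ↦ by simp [integral_congr_ae h]⟩
  have hint : Integrable f μ := (integrable_const (1 : ℝ)).mono' hf hf_le
  have hint_re : Integrable (fun a ↦ (f a).re) μ := hint.re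
  have hgap_nonneg : 0 ≤ᵐ[μ] fun a ↦ 1 - (f a).re := by
    filter_upwards [hf_le] with a ha
    exact sub_nonneg.2 ((re_le_norm _).trans ha)
  have hgap_integral : ∫ a, (1 - (f a).re) ∂μ = 0 := by
    have hre_integral : ∫ a, (f a).re ∂μ = 1 := by simpa [h] using integral_re hint
    rw [integral_sub (integrable_const 1) hint_re, hre_integral]
    simp
  have hre := (integral_eq_zero_iff_of_nonneg_ae hgap_nonneg
    ((integrable_const 1).sub hint_re)).1 hgap_integral
  filter_upwards [hre, hf_le] with a ha ha_le
  have ha : 1 - (f a).re = 0 := ha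
  exact eq_one_of_re_eq_one_of_norm_le_one (sub_eq_zero.1 ha).symm ha_le

theorem ae_forall_mem_of_isClosed {Y α : Type*} [TopologicalSpace Y] [MeasurableSpace α]
    {μ : Measure α} {S : Set Y} [TopologicalSpace.SeparableSpace S] {p : Y → α → Prop}
    (hp : ∀ a, IsClosed {y | p y a}) (h : ∀ y ∈ S, ∀ᵐ a ∂μ, p y a) :
    ∀ᵐ a ∂μ, ∀ y ∈ S, p y a := by
  obtain ⟨D, hD_countable, hD_dense⟩ := TopologicalSpace.exists_countable_dense S
  have hS_sub : S ⊆ closure (Subtype.val '' D) := Subtype.dense_iff.1 hD_dense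
  have hD : ∀ᵐ a ∂μ, ∀ y ∈ Subtype.val '' D, p y a :=
    (ae_ball_iff (hD_countable.image _)).2 fun y hy ↦ h y (by obtain ⟨y, -, rfl⟩ := hy; exact y.2)
  filter_upwards [hD] with a ha
  exact fun y hy ↦ (hp a).closure_subset_iff.2 ha (hS_sub hy)

namespace DualGroup

variable {X : Type*} [AddCommGroup X] [TopologicalSpace X]

theorem continuous_apply_ofAdd (y : DualGroup X) :
    Continuous fun x : X ↦ (y (Multiplicative.ofAdd x) : ℂ) :=
  continuous_subtype_val.comp ((map_continuous y).comp continuous_ofAdd)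

-- `PontryaginDual` is a `def`, so the instance for `→ₜ*` has to be supplied by hand.
theorem continuous_eval (x : X) : Continuous fun y : DualGroup X ↦ y (Multiplicative.ofAdd x) :=
  (ContinuousMonoidHom.instContinuousEvalConst _ _).continuous_eval_const _

instance [LocallyCompactSpace X] [SecondCountableTopology X] :
    SecondCountableTopology (DualGroup X) :=
  have : LocallyCompactSpace (Multiplicative X) := ‹_›
  have : SecondCountableTopology (Multiplicative X) := ‹_›
  (ContinuousMonoidHom.isEmbedding_toContinuousMap _ _).secondCountableTopology

end DualGroup

section charFun'

variable {X : Type*} [AddCommGroup X] [TopologicalSpace X] [MeasurableSpace X]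

@[simp]
theorem charFun'_one (μ : Measure X) [IsProbabilityMeasure μ] : charFun' μ 1 = 1 := by
  simp [charFun']

theorem charFun'_inv (μ : Measure X) (y : DualGroup X) : charFun' μ y⁻¹ = conj (charFun' μ y) := by
  simp only [charFun', ← integral_conj, ← Circle.coe_inv_eq_conj]
  rfl

variable [OpensMeasurableSpace X] {μ : Measure X} [IsProbabilityMeasure μ]

theorem charFun'_eq_one_iff {y : DualGroup X} :
    charFun' μ y = 1 ↔ ∀ᵐ x ∂μ, y (Multiplicative.ofAdd x) = 1 := by
  simpa only [charFun', Circle.coe_eq_one] using integral_eq_one_iff_ae_eq_one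
    y.continuous_apply_ofAdd.aestronglyMeasurable (.of_forall fun x ↦ (Circle.norm_coe _).le)

theorem charFun'_mul_of_charFun'_eq_one (y : DualGroup X) {h : DualGroup X}
    (hh : charFun' μ h = 1) : charFun' μ (y * h) = charFun' μ y := by
  refine integral_congr_ae ?_
  filter_upwards [charFun'_eq_one_iff.1 hh] with x hx
  show ((y (Multiplicative.ofAdd x) * h (Multiplicative.ofAdd x) : Circle) : ℂ) = _
  rw [hx, mul_one]

theorem ae_forall_apply_eq_one_of_charFun'_eq_one
    [LocallyCompactSpace X] [SecondCountableTopology X] :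
    ∀ᵐ x ∂μ, ∀ y : DualGroup X, charFun' μ y = 1 → y (Multiplicative.ofAdd x) = 1 :=
  ae_forall_mem_of_isClosed (S := {y | charFun' μ y = 1})
    (fun x ↦ isClosed_eq (DualGroup.continuous_eval x) continuous_const)
    fun _ hy ↦ charFun'_eq_one_iff.1 hy

theorem continuous_charFun' [LocallyCompactSpace X] [SecondCountableTopology X] :
    Continuous (charFun' μ) :=
  continuous_of_dominated (bound := fun _ ↦ 1)
    (fun y ↦ y.continuous_apply_ofAdd.aestronglyMeasurable)
    (fun _ ↦ .of_forall fun _ ↦ (Circle.norm_coe _).le) (integrable_const 1)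
    (.of_forall fun x ↦ continuous_subtype_val.comp (DualGroup.continuous_eval x))

end charFun'

theorem charFun_eq_one_set_is_closed_subgroup_and_invariance_general
    {X : Type*} [AddCommGroup X] [TopologicalSpace X]
    [LocallyCompactSpace X] [SecondCountableTopology X]
    [MeasurableSpace X] [BorelSpace X]
    (μ : Measure X) [IsProbabilityMeasure μ] :
    -- (a) `E = {y : μ̂(y) = 1}` is a closed subgroup of the dual group `Y`
    (1 : DualGroup X) ∈ {y : DualGroup X | charFun' μ y = 1} ∧
    (∀ u v : DualGroup X, charFun' μ u = 1 → charFun' μ v = 1 → charFun' μ (u * v) = 1) ∧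
    (∀ u : DualGroup X, charFun' μ u = 1 → charFun' μ u⁻¹ = 1) ∧
    IsClosed {y : DualGroup X | charFun' μ y = 1} ∧
    -- (b) `μ̂` is `E`-invariant
    (∀ y h : DualGroup X, charFun' μ h = 1 → charFun' μ (y * h) = charFun' μ y) ∧
    -- (c) `μ` is concentrated on the annihilator `A(X, E)`
    μ {x : X | ∀ y : DualGroup X, charFun' μ y = 1 → y (Multiplicative.ofAdd x) = 1} = 1 :=
  ⟨charFun'_one μ,
    fun u _ hu hv ↦ (charFun'_mul_of_charFun'_eq_one u hv).trans hu,
    fun u hu ↦ by rw [charFun'_inv, hu, map_one],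
    isClosed_eq continuous_charFun' continuous_const,
    fun y _ hh ↦ charFun'_mul_of_charFun'_eq_one y hh,
    (measure_congr (ae_eq_univ.2 ae_forall_apply_eq_one_of_charFun'_eq_one)).trans measure_univ⟩

theorem charFun_eq_one_set_is_closed_subgroup_and_invariance
    {X : Type*} [AddCommGroup X] [TopologicalSpace X] [IsTopologicalAddGroup X]
    [LocallyCompactSpace X] [SecondCountableTopology X] [T2Space X]
    [MeasurableSpace X] [BorelSpace X]
    (μ : Measure X) [IsProbabilityMeasure μ] :
    -- (a) `E = {y : μ̂(y) = 1}` is a closed subgroup of the dual group `Y`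
    (1 : DualGroup X) ∈ {y : DualGroup X | charFun' μ y = 1} ∧
    (∀ u v : DualGroup X, charFun' μ u = 1 → charFun' μ v = 1 → charFun' μ (u * v) = 1) ∧
    (∀ u : DualGroup X, charFun' μ u = 1 → charFun' μ u⁻¹ = 1) ∧
    IsClosed {y : DualGroup X | charFun' μ y = 1} ∧
    -- (b) `μ̂` is `E`-invariant
    (∀ y h : DualGroup X, charFun' μ h = 1 → charFun' μ (y * h) = charFun' μ y) ∧
    -- (c) `μ` is concentrated on the annihilator `A(X, E)`
    μ {x : X | ∀ y : DualGroup X, charFun' μ y = 1 → y (Multiplicative.ofAdd x) = 1} = 1 :=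
  charFun_eq_one_set_is_closed_subgroup_and_invariance_general μ

end
end

section
/- Let X be a second countable Hausdorff locally compact abelian group, let G be a subgroup of X whose underlying set is Borel measurable, and let μ₁, μ₂ be probability measures on X such that (μ₁ ∗ μ₂)(G) = 1. Then there exists x ∈ X such that (μ₁ ∗ δ_x)(G) = 1 and (μ₂ ∗ δ_{−x})(G) = 1. -/
open MeasureTheory

noncomputable section

/-!
Since `(μ₁ ∗ μ₂)(G) = 1`, Fubini gives `a + b ∈ G` for `μ₁`-a.e. `a` and `μ₂`-a.e. `b`, in either
order of quantifiers. Fix `a₀` with `a₀ + b ∈ G` for `μ₂`-a.e. `b`, then `x` with `a₀ + x ∈ G` and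
`a + x ∈ G` for `μ₁`-a.e. `a`. As `G` is a subgroup, `b - x = (a₀ + b) - (a₀ + x) ∈ G` for
`μ₂`-a.e. `b`, so both shifted measures are carried by `G`.
-/

theorem AddSubgroup.exists_eventually_add_mem_and_eventually_sub_mem
    {M : Type*} [AddCommGroup M] (G : AddSubgroup M) {f g : Filter M} [f.NeBot] [g.NeBot]
    (hfg : ∀ᶠ a in f, ∀ᶠ b in g, a + b ∈ G) (hgf : ∀ᶠ b in g, ∀ᶠ a in f, a + b ∈ G) :
    ∃ x, (∀ᶠ a in f, a + x ∈ G) ∧ ∀ᶠ b in g, b - x ∈ G := by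
  obtain ⟨a₀, ha₀⟩ := hfg.exists
  obtain ⟨x, ha₀x, hx⟩ := (ha₀.and hgf).exists
  refine ⟨x, hx, ha₀.mono fun b hb => ?_⟩
  have hsub := G.sub_mem hb ha₀x
  rwa [add_sub_add_left_eq_sub] at hsub

namespace MeasureTheory.Measure

variable {M : Type*} [AddMonoid M] [MeasurableSpace M] [MeasurableAdd₂ M]

theorem ae_conv_mem_iff {μ ν : Measure M} [SFinite ν] {s : Set M} (hs : MeasurableSet s) :
    (∀ᵐ z ∂μ ∗ ν, z ∈ s) ↔ ∀ᵐ a ∂μ, ∀ᵐ b ∂ν, a + b ∈ s := by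
  rw [conv, ae_map_iff (p := (· ∈ s)) (by fun_prop) hs]
  exact ae_prod_iff_ae_ae (hs.preimage measurable_add)

theorem conv_apply_eq_one_iff {μ ν : Measure M} [IsProbabilityMeasure μ] [IsProbabilityMeasure ν]
    {s : Set M} (hs : MeasurableSet s) :
    (μ ∗ ν) s = 1 ↔ ∀ᵐ a ∂μ, ∀ᵐ b ∂ν, a + b ∈ s := by
  rw [← mem_ae_iff_prob_eq_one hs, ← ae_conv_mem_iff hs]
  rfl

theorem conv_dirac_apply_eq_one_iff {μ : Measure M} [IsProbabilityMeasure μ] {s : Set M}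
    (hs : MeasurableSet s) (x : M) :
    (μ ∗ dirac x) s = 1 ↔ ∀ᵐ a ∂μ, a + x ∈ s := by
  rw [conv_apply_eq_one_iff hs]
  exact Filter.eventually_congr (.of_forall fun a => ae_dirac_iff (hs.preimage (measurable_const_add a)))

end MeasureTheory.Measure

theorem shift_factors_into_borel_subgroup_general
    {X : Type*} [AddCommGroup X] [TopologicalSpace X] [IsTopologicalAddGroup X]
    [SecondCountableTopology X]
    [MeasurableSpace X] [BorelSpace X]
    (G : AddSubgroup X) (hG : MeasurableSet (G : Set X))
    (μ₁ μ₂ : Measure X) [IsProbabilityMeasure μ₁] [IsProbabilityMeasure μ₂]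
    (h : (μ₁.conv μ₂) (G : Set X) = 1) :
    ∃ x : X, (μ₁.conv (Measure.dirac x)) (G : Set X) = 1 ∧
      (μ₂.conv (Measure.dirac (-x))) (G : Set X) = 1 := by
  have h₁₂ : ∀ᵐ a ∂μ₁, ∀ᵐ b ∂μ₂, a + b ∈ G := (Measure.conv_apply_eq_one_iff hG).1 h
  have h₂₁ : ∀ᵐ b ∂μ₂, ∀ᵐ a ∂μ₁, a + b ∈ G :=
    (Measure.ae_ae_comm (p := fun a b => a + b ∈ G) (hG.preimage measurable_add)).1 h₁₂
  obtain ⟨x, hx₁, hx₂⟩ := G.exists_eventually_add_mem_and_eventually_sub_mem h₁₂ h₂₁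
  refine ⟨x, (Measure.conv_dirac_apply_eq_one_iff hG x).2 hx₁,
    (Measure.conv_dirac_apply_eq_one_iff hG (-x)).2 ?_⟩
  simpa only [← sub_eq_add_neg, SetLike.mem_coe] using hx₂

theorem shift_factors_into_borel_subgroup
    {X : Type*} [AddCommGroup X] [TopologicalSpace X] [IsTopologicalAddGroup X]
    [LocallyCompactSpace X] [SecondCountableTopology X] [T2Space X]
    [MeasurableSpace X] [BorelSpace X]
    (G : AddSubgroup X) (hG : MeasurableSet (G : Set X))
    (μ₁ μ₂ : Measure X) [IsProbabilityMeasure μ₁] [IsProbabilityMeasure μ₂]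
    (h : (μ₁.conv μ₂) (G : Set X) = 1) :
    ∃ x : X, (μ₁.conv (Measure.dirac x)) (G : Set X) = 1 ∧
      (μ₂.conv (Measure.dirac (-x))) (G : Set X) = 1 :=
  shift_factors_into_borel_subgroup_general G hG μ₁ μ₂ h
end
end

section
/- Let X be a second countable Hausdorff locally compact abelian group, α a topological automorphism of X, and μ₁, μ₂ probability measures on X. If the pushforward of μ₁ ⊗ μ₂ under (x₁,x₂) ↦ (x₁+x₂, x₁+αx₂) equals its pushforward under (x₁,x₂) ↦ (x₁+x₂, −(x₁+αx₂)), then the random vectors L₁' = (I+α)ξ₁ + 2αξ₂ and L₂' = 2ξ₁ + (I+α)ξ₂ are independent; that is, the pushforward ρ of μ₁ ⊗ μ₂ under (x₁,x₂) ↦ (x₁ + αx₁ + 2αx₂, 2x₁ + x₂ + αx₂) equals the product of its two marginal measures. -/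
/-!
With `T₊ (x, y) = (x + y, x + α y)`, `T₋ = -T₊` in the second coordinate and
`G (s, t) = (α s + t, s + t)`, the pair of forms is `G ∘ T₊`. The symmetry condition says
`T₊` and `T₋` push `μ₁ ⊗ μ₂` to the same measure, so the pushforward of `μ₁ ⊗ μ₂` under the
forms is also its pushforward under `G ∘ T₋ = (α - I) × (I - α)`, a product map. Hence that
pushforward is a product of probability measures, which is the product of its marginals.
-/

open MeasureTheory

noncomputable section

/-- The symmetry condition: the conditional distribution of `L₂ = ξ₁ + α ξ₂` given
`L₁ = ξ₁ + ξ₂` is symmetric, for independent `ξ₁ ~ μ₁`, `ξ₂ ~ μ₂`. -/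
def SymCond {X : Type*} [AddCommGroup X] [TopologicalSpace X] [MeasurableSpace X]
    (μ₁ μ₂ : Measure X) (α : X → X) : Prop :=
  Measure.map (fun p : X × X => (p.1 + p.2, p.1 + α p.2)) (μ₁.prod μ₂) =
    Measure.map (fun p : X × X => (p.1 + p.2, -(p.1 + α p.2))) (μ₁.prod μ₂)

namespace MeasureTheory.Measure

theorem prod_map_fst_map_snd_of_eq_prod {α β : Type*} [MeasurableSpace α] [MeasurableSpace β]
    {ρ : Measure (α × β)} {ν₁ : Measure α} {ν₂ : Measure β}
    [IsProbabilityMeasure ν₁] [IsProbabilityMeasure ν₂] (hρ : ρ = ν₁.prod ν₂) :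
    (ρ.map Prod.fst).prod (ρ.map Prod.snd) = ρ := by
  simp only [hρ, map_fst_prod, map_snd_prod, measure_univ, one_smul]

end MeasureTheory.Measure

section Forms

variable {X F : Type*} [AddCommGroup X] [FunLike F X X] [AddMonoidHomClass F X X]

theorem forms_eq_comp_linForms (α : F) :
    (fun p : X × X => (p.1 + α p.1 + (α p.2 + α p.2), p.1 + p.1 + (p.2 + α p.2))) =
      (fun q : X × X => (α q.1 + q.2, q.1 + q.2)) ∘
        (fun p : X × X => (p.1 + p.2, p.1 + α p.2)) := by
  funext p
  simp only [Function.comp_apply, map_add, Prod.mk.injEq]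
  constructor <;> abel

theorem comp_linForms_neg_eq_prodMap (α : F) :
    (fun q : X × X => (α q.1 + q.2, q.1 + q.2)) ∘
        (fun p : X × X => (p.1 + p.2, -(p.1 + α p.2))) =
      Prod.map (fun x => α x - x) (fun y => y - α y) := by
  funext p
  simp only [Function.comp_apply, map_add, Prod.map, Prod.mk.injEq]
  constructor <;> abel

variable [TopologicalSpace X] [MeasurableSpace X] [MeasurableAdd₂ X] [MeasurableNeg X]

theorem map_forms_eq_prod_of_symCond {α : F} (hα : Measurable α)
    {μ₁ μ₂ : Measure X} [SFinite μ₁] [SFinite μ₂] (hsym : SymCond μ₁ μ₂ α) :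
    (μ₁.prod μ₂).map
        (fun p : X × X => (p.1 + α p.1 + (α p.2 + α p.2), p.1 + p.1 + (p.2 + α p.2))) =
      (μ₁.map fun x => α x - x).prod (μ₂.map fun y => y - α y) := by
  have hG : Measurable fun q : X × X => (α q.1 + q.2, q.1 + q.2) := by fun_prop
  have hTpos : Measurable fun p : X × X => (p.1 + p.2, p.1 + α p.2) := by fun_prop
  have hTneg : Measurable fun p : X × X => (p.1 + p.2, -(p.1 + α p.2)) := by fun_prop
  rw [forms_eq_comp_linForms, ← Measure.map_map hG hTpos, hsym, Measure.map_map hG hTneg,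
    comp_linForms_neg_eq_prodMap, ← Measure.map_prod_map _ _ (by fun_prop) (by fun_prop)]

end Forms

theorem symmetry_implies_independence_of_forms_general
    {X : Type*} [AddCommGroup X] [TopologicalSpace X] [IsTopologicalAddGroup X]
    [SecondCountableTopology X]
    [MeasurableSpace X] [BorelSpace X]
    (α : X ≃+ X) (hα : Continuous α)
    (μ₁ μ₂ : Measure X) [IsProbabilityMeasure μ₁] [IsProbabilityMeasure μ₂]
    (hsym : SymCond μ₁ μ₂ α) :
    Measure.map (fun p : X × X => (p.1 + α p.1 + (α p.2 + α p.2),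
        p.1 + p.1 + (p.2 + α p.2))) (μ₁.prod μ₂) =
      (Measure.map Prod.fst (Measure.map (fun p : X × X => (p.1 + α p.1 + (α p.2 + α p.2),
          p.1 + p.1 + (p.2 + α p.2))) (μ₁.prod μ₂))).prod
        (Measure.map Prod.snd (Measure.map (fun p : X × X => (p.1 + α p.1 + (α p.2 + α p.2),
          p.1 + p.1 + (p.2 + α p.2))) (μ₁.prod μ₂))) := by
  have hα_meas : Measurable α := hα.measurable
  have : IsProbabilityMeasure (μ₁.map fun x => α x - x) :=
    Measure.isProbabilityMeasure_map (by fun_prop)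
  have : IsProbabilityMeasure (μ₂.map fun y => y - α y) :=
    Measure.isProbabilityMeasure_map (by fun_prop)
  exact (Measure.prod_map_fst_map_snd_of_eq_prod
    (map_forms_eq_prod_of_symCond hα_meas hsym)).symm

theorem symmetry_implies_independence_of_forms
    {X : Type*} [AddCommGroup X] [TopologicalSpace X] [IsTopologicalAddGroup X]
    [LocallyCompactSpace X] [SecondCountableTopology X] [T2Space X]
    [MeasurableSpace X] [BorelSpace X]
    (α : X ≃+ X) (hα : Continuous α) (hα' : Continuous α.symm)
    (μ₁ μ₂ : Measure X) [IsProbabilityMeasure μ₁] [IsProbabilityMeasure μ₂]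
    (hsym : SymCond μ₁ μ₂ α) :
    Measure.map (fun p : X × X => (p.1 + α p.1 + (α p.2 + α p.2),
        p.1 + p.1 + (p.2 + α p.2))) (μ₁.prod μ₂) =
      (Measure.map Prod.fst (Measure.map (fun p : X × X => (p.1 + α p.1 + (α p.2 + α p.2),
          p.1 + p.1 + (p.2 + α p.2))) (μ₁.prod μ₂))).prod
        (Measure.map Prod.snd (Measure.map (fun p : X × X => (p.1 + α p.1 + (α p.2 + α p.2),
          p.1 + p.1 + (p.2 + α p.2))) (μ₁.prod μ₂))) :=
  symmetry_implies_independence_of_forms_general α hα μ₁ μ₂ hsym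

end
end

section
/- Let σ ≥ 0, σ' ≥ 0 and β, β', κ ∈ ℝ, and define f : ℝ × ℤ/2ℤ → ℂ by f(s,0) = exp(−σs² + iβs) and f(s,1) = κ·exp(−σ's² + iβ's). Then there exists a finite signed measure μ on ℝ × ℤ/2ℤ whose characteristic function equals f, i.e. μ̂(s,l) = f(s,l) for all (s,l) ∈ ℝ × ℤ/2ℤ. -/
open MeasureTheory Complex

noncomputable section

/-- The character of `ℝ × ℤ/2ℤ` with parameter `(s, l)`, evaluated at `(t, k)`:
`exp(i s t)·(−1)^{l k}`. -/
def charZ2 (s : ℝ) (l : ZMod 2) (p : ℝ × ZMod 2) : ℂ :=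
  Complex.exp (Complex.I * s * p.1) * (-1 : ℂ) ^ (l * p.2).val

/-- The characteristic function of a finite signed measure on `ℝ × ℤ/2ℤ`, defined through
its Jordan decomposition. -/
def sCharZ2 (μ : SignedMeasure (ℝ × ZMod 2)) (s : ℝ) (l : ZMod 2) : ℂ :=
  (∫ p, charZ2 s l p ∂μ.toJordanDecomposition.posPart) -
    (∫ p, charZ2 s l p ∂μ.toJordanDecomposition.negPart)

/-!
On the fibre `ℝ × {k}` take the measure `(ν₀ + (-1)ᵏ κ ν₁) / 2`, where `ν₀`, `ν₁` are the
Gaussians with characteristic functions `exp(−σs² + iβs)`, `exp(−σ's² + iβ's)`. Pairing with the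
character `(s, l)` sums the fibres with signs `(-1)^{lk}`: for `l = 0` the `ν₁` terms cancel and
`ν₀` is counted twice with weight `1/2`, for `l = 1` the `ν₀` terms cancel and `κ ν₁` survives.
-/

open ProbabilityTheory
open scoped NNReal

theorem integral_sub_integral_eq_of_toSignedMeasure_sub_eq {α E : Type*} [MeasurableSpace α]
    [NormedAddCommGroup E] [NormedSpace ℝ E] {P N P' N' : Measure α} [IsFiniteMeasure P]
    [IsFiniteMeasure N] [IsFiniteMeasure P'] [IsFiniteMeasure N'] {f : α → E}
    (hP : Integrable f P) (hN : Integrable f N) (hP' : Integrable f P') (hN' : Integrable f N')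
    (h : P.toSignedMeasure - N.toSignedMeasure = P'.toSignedMeasure - N'.toSignedMeasure) :
    ∫ x, f x ∂P - ∫ x, f x ∂N = ∫ x, f x ∂P' - ∫ x, f x ∂N' := by
  have hsum : P + N' = P' + N := by
    rw [← Measure.toSignedMeasure_eq_toSignedMeasure_iff, Measure.toSignedMeasure_add,
      Measure.toSignedMeasure_add]
    exact sub_eq_sub_iff_add_eq_add.mp h
  rw [sub_eq_sub_iff_add_eq_add, ← integral_add_measure hP hN', hsum,
    integral_add_measure hP' hN]

theorem norm_charZ2 (s : ℝ) (l : ZMod 2) (p : ℝ × ZMod 2) : ‖charZ2 s l p‖ = 1 := by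
  simp [charZ2, Complex.norm_exp, mul_comm]

theorem measurable_charZ2 (s : ℝ) (l : ZMod 2) : Measurable (charZ2 s l) := by
  unfold charZ2
  fun_prop

theorem integrable_charZ2 (s : ℝ) (l : ZMod 2) (ν : Measure (ℝ × ZMod 2)) [IsFiniteMeasure ν] :
    Integrable (charZ2 s l) ν :=
  .of_bound (measurable_charZ2 s l).aestronglyMeasurable 1
    (.of_forall fun p => (norm_charZ2 s l p).le)

theorem sCharZ2_toSignedMeasure_sub (P N : Measure (ℝ × ZMod 2)) [IsFiniteMeasure P]
    [IsFiniteMeasure N] (s : ℝ) (l : ZMod 2) :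
    sCharZ2 (P.toSignedMeasure - N.toSignedMeasure) s l
      = ∫ p, charZ2 s l p ∂P - ∫ p, charZ2 s l p ∂N :=
  integral_sub_integral_eq_of_toSignedMeasure_sub_eq (integrable_charZ2 ..)
    (integrable_charZ2 ..) (integrable_charZ2 ..) (integrable_charZ2 ..)
    (SignedMeasure.toSignedMeasure_toJordanDecomposition _)

theorem integral_charZ2_map_prodMk (ν : Measure ℝ) (k : ZMod 2) (s : ℝ) (l : ZMod 2) :
    ∫ p, charZ2 s l p ∂(ν.map (·, k)) = charFun ν s * (-1 : ℂ) ^ (l * k).val := by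
  rw [integral_map measurable_prodMk_right.aemeasurable
    (measurable_charZ2 s l).aestronglyMeasurable, charFun_apply_real]
  simp only [charZ2, integral_mul_const, mul_comm I, mul_right_comm _ I]

theorem exists_signedMeasure_sCharZ2_eq_ite (ν₀ ν₁ : Measure ℝ) [IsFiniteMeasure ν₀]
    [IsFiniteMeasure ν₁] (κ : ℝ) :
    ∃ μ : SignedMeasure (ℝ × ZMod 2), ∀ (s : ℝ) (l : ZMod 2),
      sCharZ2 μ s l = if l = 0 then charFun ν₀ s else κ * charFun ν₁ s := by
  obtain ⟨a, b, hab⟩ : ∃ a b : ℝ≥0, (a : ℝ) - b = κ / 2 :=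
    ⟨(κ / 2).toNNReal, (-(κ / 2)).toNNReal, by
      simp [Real.coe_toNNReal', max_zero_sub_max_neg_zero_eq_self]⟩
  let ι (ν : Measure ℝ) (k : ZMod 2) : Measure (ℝ × ZMod 2) := ν.map (·, k)
  let P := (2 : ℝ≥0)⁻¹ • (ι ν₀ 0 + ι ν₀ 1) + (a • ι ν₁ 0 + b • ι ν₁ 1)
  let N := b • ι ν₁ 0 + a • ι ν₁ 1
  refine ⟨P.toSignedMeasure - N.toSignedMeasure, fun s l => ?_⟩
  simp only [sCharZ2_toSignedMeasure_sub, P, N, ι, integral_add_measure, integrable_charZ2,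
    integral_smul_nnreal_measure, integral_charZ2_map_prodMk, NNReal.smul_def, real_smul]
  obtain rfl | rfl : l = 0 ∨ l = 1 := by decide +revert
  · simp only [mul_zero, ZMod.val_zero, pow_zero, mul_one, if_pos]
    push_cast
    ring
  · have hab' : ((a : ℝ) : ℂ) - (b : ℝ) = κ / 2 := by exact_mod_cast hab
    simp only [mul_one, mul_zero, ZMod.val_zero, ZMod.val_one, pow_zero, pow_one, one_ne_zero,
      if_false]
    linear_combination 2 * charFun ν₁ s * hab'

theorem charFun_gaussianReal_of_coe_eq_two_mul (β σ : ℝ) {v : ℝ≥0} (hv : (v : ℝ) = 2 * σ)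
    (s : ℝ) :
    charFun (gaussianReal β v) s
      = Complex.exp (-(σ : ℂ) * (s : ℂ) ^ 2 + Complex.I * (β : ℂ) * (s : ℂ)) := by
  rw [charFun_gaussianReal, hv]
  congr 1
  push_cast
  ring

theorem exists_signed_measure_with_piecewise_gaussian_charFun
    (σ σ' : ℝ) (hσ : 0 ≤ σ) (hσ' : 0 ≤ σ') (β β' κ : ℝ) :
    ∃ μ : SignedMeasure (ℝ × ZMod 2), ∀ (s : ℝ) (l : ZMod 2),
      sCharZ2 μ s l =
        if l = 0 then Complex.exp (-(σ : ℂ) * (s : ℂ) ^ 2 + Complex.I * (β : ℂ) * (s : ℂ))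
        else (κ : ℂ) *
          Complex.exp (-(σ' : ℂ) * (s : ℂ) ^ 2 + Complex.I * (β' : ℂ) * (s : ℂ)) := by
  obtain ⟨μ, hμ⟩ := exists_signedMeasure_sCharZ2_eq_ite
    (gaussianReal β (2 * σ).toNNReal) (gaussianReal β' (2 * σ').toNNReal) κ
  refine ⟨μ, fun s l => ?_⟩
  rw [hμ, charFun_gaussianReal_of_coe_eq_two_mul β σ (Real.coe_toNNReal _ (by positivity)),
    charFun_gaussianReal_of_coe_eq_two_mul β' σ' (Real.coe_toNNReal _ (by positivity))]

end
end

section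
/- Let Y be an (additively written) abelian group, β an automorphism of Y, and φ₁, φ₂ : Y → ℝ functions satisfying φ₁(u+v) + φ₂(u+βv) − φ₁(u−v) − φ₂(u−βv) = 0 for all u, v ∈ Y. Then for every h ∈ Y such that h = k₁ + βk₁ for some k₁ ∈ Y, h = 2k₂ for some k₂ ∈ Y, and h = k₃ − βk₃ for some k₃ ∈ Y, one has Δ_h³ φ_j(y) = 0 for all y ∈ Y and j = 1, 2, where Δ_h f(y) = f(y+h) − f(y) is the finite difference operator and Δ_h³ denotes its third iterate. -/
set_option linter.unusedTactic false


/-- The finite difference operator `Δ_h f(y) = f(y+h) − f(y)`. -/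
def fdiff {Y : Type*} [AddCommGroup Y] (h : Y) (f : Y → ℝ) : Y → ℝ :=
  fun y => f (y + h) - f y

private lemma aux1 {Y : Type*} [AddCommGroup Y] (β : Y ≃+ Y) (φ₁ φ₂ : Y → ℝ)
    (hfe : ∀ u v : Y, φ₁ (u + v) + φ₂ (u + β v) - φ₁ (u - v) - φ₂ (u - β v) = 0)
    (t₁ t₂ t₃ y : Y) :
    fdiff (t₃ - β t₃) (fdiff (t₂ + t₂) (fdiff (t₁ + β t₁) φ₁)) y = 0 := by
  have e000 : φ₁ (y) + φ₂ (y) - φ₁ (y) - φ₂ (y) = 0 := by ring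
  have e001 : φ₁ (y + (t₃ - β t₃)) + φ₂ (y) - φ₁ (y - (t₃ + β t₃)) - φ₂ (y - (β t₃ + β t₃)) = 0 := by
    have hh := hfe (y - β t₃) (t₃)
    rw [show y - β t₃ + (t₃) = y + (t₃ - β t₃) by abel,
        show y - β t₃ + β (t₃) = y by (try simp only [map_add, map_sub, map_neg]); abel,
        show y - β t₃ - (t₃) = y - (t₃ + β t₃) by abel,
        show y - β t₃ - β (t₃) = y - (β t₃ + β t₃) by (try simp only [map_add, map_sub, map_neg]); abel] at hh
    exact hh
  have e010 : φ₁ (y + (t₂ + t₂)) + φ₂ (y + (t₂ + β t₂)) - φ₁ (y) - φ₂ (y + (t₂ - β t₂)) = 0 := by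
    have hh := hfe (y + t₂) (t₂)
    rw [show y + t₂ + (t₂) = y + (t₂ + t₂) by abel,
        show y + t₂ + β (t₂) = y + (t₂ + β t₂) by (try simp only [map_add, map_sub, map_neg]); abel,
        show y + t₂ - (t₂) = y by abel,
        show y + t₂ - β (t₂) = y + (t₂ - β t₂) by (try simp only [map_add, map_sub, map_neg]); abel] at hh
    exact hh
  have e011 : φ₁ (y + (t₃ - β t₃) + (t₂ + t₂)) + φ₂ (y + (t₂ + β t₂)) - φ₁ (y - (t₃ + β t₃)) - φ₂ (y + (t₂ - β t₂) - (β t₃ + β t₃)) = 0 := by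
    have hh := hfe (y + t₂ - β t₃) (t₂ + t₃)
    rw [show y + t₂ - β t₃ + (t₂ + t₃) = y + (t₃ - β t₃) + (t₂ + t₂) by abel,
        show y + t₂ - β t₃ + β (t₂ + t₃) = y + (t₂ + β t₂) by (try simp only [map_add, map_sub, map_neg]); abel,
        show y + t₂ - β t₃ - (t₂ + t₃) = y - (t₃ + β t₃) by abel,
        show y + t₂ - β t₃ - β (t₂ + t₃) = y + (t₂ - β t₂) - (β t₃ + β t₃) by (try simp only [map_add, map_sub, map_neg]); abel] at hh
    exact hh
  have e100 : φ₁ (y + (t₁ + β t₁)) + φ₂ (y + (β t₁ + β t₁)) - φ₁ (y + (β t₁ - t₁)) - φ₂ (y) = 0 := by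
    have hh := hfe (y + β t₁) (t₁)
    rw [show y + β t₁ + (t₁) = y + (t₁ + β t₁) by abel,
        show y + β t₁ + β (t₁) = y + (β t₁ + β t₁) by (try simp only [map_add, map_sub, map_neg]); abel,
        show y + β t₁ - (t₁) = y + (β t₁ - t₁) by abel,
        show y + β t₁ - β (t₁) = y by (try simp only [map_add, map_sub, map_neg]); abel] at hh
    exact hh
  have e101 : φ₁ (y + (t₃ - β t₃) + (t₁ + β t₁)) + φ₂ (y + (β t₁ + β t₁)) - φ₁ (y + (β t₁ - t₁) - (t₃ + β t₃)) - φ₂ (y - (β t₃ + β t₃)) = 0 := by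
    have hh := hfe (y + β t₁ - β t₃) (t₁ + t₃)
    rw [show y + β t₁ - β t₃ + (t₁ + t₃) = y + (t₃ - β t₃) + (t₁ + β t₁) by abel,
        show y + β t₁ - β t₃ + β (t₁ + t₃) = y + (β t₁ + β t₁) by (try simp only [map_add, map_sub, map_neg]); abel,
        show y + β t₁ - β t₃ - (t₁ + t₃) = y + (β t₁ - t₁) - (t₃ + β t₃) by abel,
        show y + β t₁ - β t₃ - β (t₁ + t₃) = y - (β t₃ + β t₃) by (try simp only [map_add, map_sub, map_neg]); abel] at hh
    exact hh
  have e110 : φ₁ (y + (t₂ + t₂) + (t₁ + β t₁)) + φ₂ (y + (β t₁ + β t₁) + (t₂ + β t₂)) - φ₁ (y + (β t₁ - t₁)) - φ₂ (y + (t₂ - β t₂)) = 0 := by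
    have hh := hfe (y + β t₁ + t₂) (t₁ + t₂)
    rw [show y + β t₁ + t₂ + (t₁ + t₂) = y + (t₂ + t₂) + (t₁ + β t₁) by abel,
        show y + β t₁ + t₂ + β (t₁ + t₂) = y + (β t₁ + β t₁) + (t₂ + β t₂) by (try simp only [map_add, map_sub, map_neg]); abel,
        show y + β t₁ + t₂ - (t₁ + t₂) = y + (β t₁ - t₁) by abel,
        show y + β t₁ + t₂ - β (t₁ + t₂) = y + (t₂ - β t₂) by (try simp only [map_add, map_sub, map_neg]); abel] at hh
    exact hh
  have e111 : φ₁ (y + (t₃ - β t₃) + (t₂ + t₂) + (t₁ + β t₁)) + φ₂ (y + (β t₁ + β t₁) + (t₂ + β t₂)) - φ₁ (y + (β t₁ - t₁) - (t₃ + β t₃)) - φ₂ (y + (t₂ - β t₂) - (β t₃ + β t₃)) = 0 := by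
    have hh := hfe (y + β t₁ + t₂ - β t₃) (t₁ + t₂ + t₃)
    rw [show y + β t₁ + t₂ - β t₃ + (t₁ + t₂ + t₃) = y + (t₃ - β t₃) + (t₂ + t₂) + (t₁ + β t₁) by abel,
        show y + β t₁ + t₂ - β t₃ + β (t₁ + t₂ + t₃) = y + (β t₁ + β t₁) + (t₂ + β t₂) by (try simp only [map_add, map_sub, map_neg]); abel,
        show y + β t₁ + t₂ - β t₃ - (t₁ + t₂ + t₃) = y + (β t₁ - t₁) - (t₃ + β t₃) by abel,
        show y + β t₁ + t₂ - β t₃ - β (t₁ + t₂ + t₃) = y + (t₂ - β t₂) - (β t₃ + β t₃) by (try simp only [map_add, map_sub, map_neg]); abel] at hh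
    exact hh
  simp only [fdiff]
  linarith [e000, e001, e010, e011, e100, e101, e110, e111]

private lemma aux2 {Y : Type*} [AddCommGroup Y] (β : Y ≃+ Y) (φ₁ φ₂ : Y → ℝ)
    (hfe : ∀ u v : Y, φ₁ (u + v) + φ₂ (u + β v) - φ₁ (u - v) - φ₂ (u - β v) = 0)
    (t₁ t₂ t₃ y : Y) :
    fdiff (β t₃ + β t₃) (fdiff (t₂ - β t₂) (fdiff (t₁ + β t₁) φ₂)) y = 0 := by
  have e000 : φ₁ (y) + φ₂ (y) - φ₁ (y) - φ₂ (y) = 0 := by ring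
  have e001 : φ₁ (y + (t₃ + β t₃)) + φ₂ (y + (β t₃ + β t₃)) - φ₁ (y + (β t₃ - t₃)) - φ₂ (y) = 0 := by
    have hh := hfe (y + β t₃) (t₃)
    rw [show y + β t₃ + (t₃) = y + (t₃ + β t₃) by abel,
        show y + β t₃ + β (t₃) = y + (β t₃ + β t₃) by (try simp only [map_add, map_sub, map_neg]); abel,
        show y + β t₃ - (t₃) = y + (β t₃ - t₃) by abel,
        show y + β t₃ - β (t₃) = y by (try simp only [map_add, map_sub, map_neg]); abel] at hh
    exact hh
  have e010 : φ₁ (y) + φ₂ (y + (t₂ - β t₂)) - φ₁ (y + (t₂ + t₂)) - φ₂ (y + (t₂ + β t₂)) = 0 := by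
    have hh := hfe (y + t₂) (-t₂)
    rw [show y + t₂ + (-t₂) = y by abel,
        show y + t₂ + β (-t₂) = y + (t₂ - β t₂) by (try simp only [map_add, map_sub, map_neg]); abel,
        show y + t₂ - (-t₂) = y + (t₂ + t₂) by abel,
        show y + t₂ - β (-t₂) = y + (t₂ + β t₂) by (try simp only [map_add, map_sub, map_neg]); abel] at hh
    exact hh
  have e011 : φ₁ (y + (t₃ + β t₃)) + φ₂ (y + (β t₃ + β t₃) + (t₂ - β t₂)) - φ₁ (y + (t₂ + t₂) + (β t₃ - t₃)) - φ₂ (y + (t₂ + β t₂)) = 0 := by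
    have hh := hfe (y + t₂ + β t₃) (-t₂ + t₃)
    rw [show y + t₂ + β t₃ + (-t₂ + t₃) = y + (t₃ + β t₃) by abel,
        show y + t₂ + β t₃ + β (-t₂ + t₃) = y + (β t₃ + β t₃) + (t₂ - β t₂) by (try simp only [map_add, map_sub, map_neg]); abel,
        show y + t₂ + β t₃ - (-t₂ + t₃) = y + (t₂ + t₂) + (β t₃ - t₃) by abel,
        show y + t₂ + β t₃ - β (-t₂ + t₃) = y + (t₂ + β t₂) by (try simp only [map_add, map_sub, map_neg]); abel] at hh
    exact hh
  have e100 : φ₁ (y + (t₁ + t₁)) + φ₂ (y + (t₁ + β t₁)) - φ₁ (y) - φ₂ (y + (t₁ - β t₁)) = 0 := by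
    have hh := hfe (y + t₁) (t₁)
    rw [show y + t₁ + (t₁) = y + (t₁ + t₁) by abel,
        show y + t₁ + β (t₁) = y + (t₁ + β t₁) by (try simp only [map_add, map_sub, map_neg]); abel,
        show y + t₁ - (t₁) = y by abel,
        show y + t₁ - β (t₁) = y + (t₁ - β t₁) by (try simp only [map_add, map_sub, map_neg]); abel] at hh
    exact hh
  have e101 : φ₁ (y + (t₁ + t₁) + (t₃ + β t₃)) + φ₂ (y + (β t₃ + β t₃) + (t₁ + β t₁)) - φ₁ (y + (β t₃ - t₃)) - φ₂ (y + (t₁ - β t₁)) = 0 := by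
    have hh := hfe (y + t₁ + β t₃) (t₁ + t₃)
    rw [show y + t₁ + β t₃ + (t₁ + t₃) = y + (t₁ + t₁) + (t₃ + β t₃) by abel,
        show y + t₁ + β t₃ + β (t₁ + t₃) = y + (β t₃ + β t₃) + (t₁ + β t₁) by (try simp only [map_add, map_sub, map_neg]); abel,
        show y + t₁ + β t₃ - (t₁ + t₃) = y + (β t₃ - t₃) by abel,
        show y + t₁ + β t₃ - β (t₁ + t₃) = y + (t₁ - β t₁) by (try simp only [map_add, map_sub, map_neg]); abel] at hh
    exact hh
  have e110 : φ₁ (y + (t₁ + t₁)) + φ₂ (y + (t₂ - β t₂) + (t₁ + β t₁)) - φ₁ (y + (t₂ + t₂)) - φ₂ (y + (t₁ - β t₁) + (t₂ + β t₂)) = 0 := by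
    have hh := hfe (y + t₁ + t₂) (t₁ - t₂)
    rw [show y + t₁ + t₂ + (t₁ - t₂) = y + (t₁ + t₁) by abel,
        show y + t₁ + t₂ + β (t₁ - t₂) = y + (t₂ - β t₂) + (t₁ + β t₁) by (try simp only [map_add, map_sub, map_neg]); abel,
        show y + t₁ + t₂ - (t₁ - t₂) = y + (t₂ + t₂) by abel,
        show y + t₁ + t₂ - β (t₁ - t₂) = y + (t₁ - β t₁) + (t₂ + β t₂) by (try simp only [map_add, map_sub, map_neg]); abel] at hh
    exact hh
  have e111 : φ₁ (y + (t₁ + t₁) + (t₃ + β t₃)) + φ₂ (y + (β t₃ + β t₃) + (t₂ - β t₂) + (t₁ + β t₁)) - φ₁ (y + (t₂ + t₂) + (β t₃ - t₃)) - φ₂ (y + (t₁ - β t₁) + (t₂ + β t₂)) = 0 := by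
    have hh := hfe (y + t₁ + t₂ + β t₃) (t₁ - t₂ + t₃)
    rw [show y + t₁ + t₂ + β t₃ + (t₁ - t₂ + t₃) = y + (t₁ + t₁) + (t₃ + β t₃) by abel,
        show y + t₁ + t₂ + β t₃ + β (t₁ - t₂ + t₃) = y + (β t₃ + β t₃) + (t₂ - β t₂) + (t₁ + β t₁) by (try simp only [map_add, map_sub, map_neg]); abel,
        show y + t₁ + t₂ + β t₃ - (t₁ - t₂ + t₃) = y + (t₂ + t₂) + (β t₃ - t₃) by abel,
        show y + t₁ + t₂ + β t₃ - β (t₁ - t₂ + t₃) = y + (t₁ - β t₁) + (t₂ + β t₂) by (try simp only [map_add, map_sub, map_neg]); abel] at hh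
    exact hh
  simp only [fdiff]
  linarith [e000, e001, e010, e011, e100, e101, e110, e111]

theorem third_difference_vanishes_of_heyde_equation
    {Y : Type*} [AddCommGroup Y] (β : Y ≃+ Y) (φ₁ φ₂ : Y → ℝ)
    (hfe : ∀ u v : Y, φ₁ (u + v) + φ₂ (u + β v) - φ₁ (u - v) - φ₂ (u - β v) = 0)
    (h : Y)
    (h1 : ∃ k₁ : Y, h = k₁ + β k₁)
    (h2 : ∃ k₂ : Y, h = k₂ + k₂)
    (h3 : ∃ k₃ : Y, h = k₃ - β k₃) :
    ∀ y : Y, fdiff h (fdiff h (fdiff h φ₁)) y = 0 ∧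
      fdiff h (fdiff h (fdiff h φ₂)) y = 0 := by
  obtain ⟨k₁, hk₁⟩ := h1
  obtain ⟨k₂, hk₂⟩ := h2
  obtain ⟨k₃, hk₃⟩ := h3
  intro y
  constructor
  · have H := aux1 β φ₁ φ₂ hfe k₁ k₂ k₃ y
    rw [← hk₃, ← hk₂, ← hk₁] at H
    exact H
  · have H := aux2 β φ₁ φ₂ hfe k₁ k₃ (β.symm k₂) y
    rw [AddEquiv.apply_symm_apply] at H
    rw [← hk₂, ← hk₃, ← hk₁] at H
    exact H
end

section
/- Let m be an odd positive integer and let c be a real number with c ∉ {0, 1, −1}. Let M₁, M₂ be probability measures on ℝ × ℤ/mℤ whose characteristic functions are everywhere real and strictly positive and satisfy M̂₁(s₁+s₂, a₁+a₂)·M̂₂(s₁+c·s₂, a₁−a₂) = M̂₁(s₁−s₂, a₁−a₂)·M̂₂(s₁−c·s₂, a₁+a₂) for all s₁, s₂ ∈ ℝ and a₁, a₂ ∈ ℤ/mℤ. Then there exist σ₁, σ₂ ≥ 0 with σ₁ + c·σ₂ = 0 and a function κ : ℤ/mℤ → ℝ with κ(0) = 0 such that M̂_j(s,a) = exp(−σ_j·s²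 + κ(a)) for all (s,a) ∈ ℝ × ℤ/mℤ and j = 1, 2. -/
open MeasureTheory Complex

noncomputable section

/-- The characteristic function of a measure on `ℝ × ℤ/mℤ`, where the character with
parameter `(s, a)` acts on `(t, k)` as `exp(i s t)·exp(2πi·(k a)/m)`. -/
def charZM (m : ℕ) (M : Measure (ℝ × ZMod m)) (s : ℝ) (a : ZMod m) : ℂ :=
  ∫ p, Complex.exp (Complex.I * s * p.1) *
    Complex.exp (2 * Real.pi * Complex.I * (((p.2 * a).val : ℕ) : ℂ) / (m : ℂ)) ∂M

/-!
Taking logarithms turns the equation into an additive one for `ψⱼ = log M̂ⱼ`. Since `2` is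
invertible in `ℤ/mℤ`, the arguments `a₁ + a₂` and `a₁ - a₂` can be chosen independently, which
forces `ψⱼ(s, a) = ψⱼ(s, 0) + κ(a)` with the same `κ` for `j = 1, 2`.

In the real variable, writing `x = s₁ + s₂`, `y = s₁ - s₂` shows that the polar form `B` of
`Q = ψ₂(·, 0)` satisfies `B(r u, v) = B(u, r v)` with `r = (1 + c)/(1 - c)`, `|r| ≠ 1`. Hence the
third difference of `Q` is invariant under `w ↦ r² w`, so by continuity it vanishes, and an even
continuous function with biadditive polar form is a multiple of `s²`. Finally `|M̂ⱼ| ≤ 1` gives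
`σⱼ ≥ 0`.
-/

open QuadraticMap (polar)

section PolarDefect

variable {M N : Type*} [AddCommGroup M] [AddCommGroup N]

def polarDefect (f : M → N) (u v w : M) : N :=
  polar f u (v + w) - polar f u v - polar f u w

theorem polarDefect_rotate (f : M → N) (u v w : M) :
    polarDefect f u v w = polarDefect f v w u := by
  simp only [polarDefect, polar]
  rw [show v + (w + u) = u + (v + w) by abel, add_comm w u, add_comm v u]
  abel

theorem polarDefect_zero_right (f : M → N) (u v : M) : polarDefect f u v 0 = f 0 := by
  simp [polarDefect, polar]

end PolarDefect

section RealFunctionalEquations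

theorem apply_eq_apply_one_mul_of_map_add {g : ℝ → ℝ} (hg : Continuous g)
    (hadd : ∀ x y, g (x + y) = g x + g y) (x : ℝ) : g x = g 1 * x := by
  simpa [mul_comm] using map_real_smul (AddMonoidHom.mk' g hadd) hg x 1

theorem apply_eq_apply_zero_of_apply_mul_eq_of_abs_lt_one {X : Type*} [TopologicalSpace X]
    [T2Space X] {f : ℝ → X} {ρ : ℝ} (hf : ContinuousAt f 0) (hρ : |ρ| < 1)
    (h : ∀ w, f (ρ * w) = f w) (w : ℝ) : f w = f 0 := by
  have hpow : ∀ n : ℕ, f (ρ ^ n * w) = f w := by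
    intro n
    induction n with
    | zero => rw [pow_zero, one_mul]
    | succ n ih => rw [pow_succ', mul_assoc, h, ih]
  have hlim : Filter.Tendsto (fun n : ℕ => ρ ^ n * w) Filter.atTop (nhds (0 : ℝ)) := by
    simpa using (tendsto_pow_atTop_nhds_zero_of_abs_lt_one hρ).mul_const w
  have hlim' := hf.tendsto.comp hlim
  simp only [Function.comp_def, hpow] at hlim'
  exact tendsto_nhds_unique tendsto_const_nhds hlim'

theorem apply_eq_apply_zero_of_apply_mul_eq {X : Type*} [TopologicalSpace X] [T2Space X]
    {f : ℝ → X} {ρ : ℝ} (hf : ContinuousAt f 0) (hρ : |ρ| ≠ 1) (h : ∀ w, f (ρ * w) = f w)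
    (w : ℝ) : f w = f 0 := by
  rcases hρ.lt_or_gt with hlt | hgt
  · exact apply_eq_apply_zero_of_apply_mul_eq_of_abs_lt_one hf hlt h w
  · have hρ0 : ρ ≠ 0 := abs_pos.mp (one_pos.trans hgt)
    refine apply_eq_apply_zero_of_apply_mul_eq_of_abs_lt_one (ρ := ρ⁻¹) hf ?_ (fun w => ?_) w
    · rw [abs_inv]; exact inv_lt_one_of_one_lt₀ hgt
    · rw [← h, mul_inv_cancel_left₀ hρ0]

variable {f : ℝ → ℝ}

theorem polarDefect_mul_left {r : ℝ} (h : ∀ u v, polar f (r * u) v = polar f u (r * v))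
    (u v w : ℝ) : polarDefect f (r * u) v w = polarDefect f u (r * v) (r * w) := by
  simp only [polarDefect, h, mul_add]

theorem polarDefect_eq_zero_of_polar_mul_comm (hf : Continuous f) (hf0 : f 0 = 0) {r : ℝ}
    (hr0 : r ≠ 0) (hr : |r| ≠ 1) (h : ∀ u v, polar f (r * u) v = polar f u (r * v))
    (u v w : ℝ) : polarDefect f u v w = 0 := by
  have hscale : ∀ w, polarDefect f u v (r ^ 2 * w) = polarDefect f u v w := fun w =>
    calc polarDefect f u v (r ^ 2 * w) = polarDefect f v (r ^ 2 * w) u := polarDefect_rotate ..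
      _ = polarDefect f (r * v) (r * w) (u / r) := by
        rw [polarDefect_mul_left h, ← mul_assoc, ← sq, mul_div_cancel₀ u hr0]
      _ = polarDefect f (u / r) (r * v) (r * w) := (polarDefect_rotate ..).symm
      _ = polarDefect f u v w := by rw [← polarDefect_mul_left h, mul_div_cancel₀ u hr0]
  have hr2 : |r ^ 2| ≠ 1 := by
    rwa [abs_pow, Ne, pow_eq_one_iff_of_nonneg (abs_nonneg r) two_ne_zero]
  have hcont : ContinuousAt (fun w => polarDefect f u v w) 0 := by
    simp only [polarDefect, polar]
    fun_prop
  rw [apply_eq_apply_zero_of_apply_mul_eq hcont hr2 hscale w, polarDefect_zero_right, hf0]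

theorem polar_eq_mul_mul_of_polarDefect_eq_zero (hf : Continuous f)
    (h : ∀ u v w, polarDefect f u v w = 0) (u v : ℝ) : polar f u v = polar f 1 1 * u * v := by
  have hlin : ∀ u v, polar f u v = polar f u 1 * v := fun u =>
    apply_eq_apply_one_mul_of_map_add (g := fun v => polar f u v)
      (by simp only [polar]; fun_prop)
      (fun v w => by have := h u v w; rw [polarDefect] at this; linear_combination this)
  rw [hlin u v, QuadraticMap.polar_comm f u 1, hlin 1 u]

theorem eq_mul_sq_of_polar_eq_mul_mul (hf : Continuous f) (heven : ∀ u, f (-u) = f u) {b : ℝ}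
    (h : ∀ u v, polar f u v = b * u * v) (u : ℝ) : f u = f 1 * u ^ 2 := by
  have hlin := apply_eq_apply_one_mul_of_map_add (g := fun u => f u - b / 2 * u ^ 2)
    (by fun_prop) fun x y => by
      have := h x y
      rw [polar] at this
      linear_combination this
  have hf1 : f 1 = b / 2 := by
    have := hlin (-1)
    rw [heven] at this
    linarith
  linear_combination hlin u + (u - u ^ 2) * hf1

theorem heyde_fe_real_eq_mul_sq {c : ℝ} (hc0 : c ≠ 0) (hc1 : c ≠ 1) (hcm1 : c ≠ -1)
    {P Q : ℝ → ℝ} (hP0 : P 0 = 0) (hQ0 : Q 0 = 0) (hQ : Continuous Q) (hQeven : ∀ u, Q (-u) = Q u)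
    (h : ∀ s₁ s₂, P (s₁ + s₂) + Q (s₁ + c * s₂) = P (s₁ - s₂) + Q (s₁ - c * s₂)) :
    (∀ u, Q u = Q 1 * u ^ 2) ∧ ∀ x, P x = -c * Q 1 * x ^ 2 := by
  set α := (1 - c) / 2
  set β := (1 + c) / 2
  have hα : α ≠ 0 := fun hα0 => hc1 (by simp only [α] at hα0; linarith)
  have hβ : β ≠ 0 := fun hβ0 => hcm1 (by simp only [β] at hβ0; linarith)
  have hsym : ∀ x y, P x + Q (β * x + α * y) = P y + Q (α * x + β * y) := fun x y => by
    convert h ((x + y) / 2) ((x - y) / 2) using 3 <;> ring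
  have hP : ∀ x, P x = Q (α * x) - Q (β * x) := fun x => by
    have := hsym x 0
    simp only [mul_zero, add_zero, hP0] at this
    linarith
  have hpolar : ∀ u v, polar Q (β / α * u) v = polar Q u (β / α * v) := fun u v => by
    have hβα : ∀ x, β * (x / α) = β / α * x := fun x => by ring
    have := hsym (u / α) (v / α)
    rw [hP, hP, mul_div_cancel₀ u hα, mul_div_cancel₀ v hα, hβα, hβα] at this
    simp only [polar]
    linarith
  have hr : |β / α| ≠ 1 := by
    rw [Ne, abs_div, div_eq_one_iff_eq (abs_ne_zero.mpr hα), abs_eq_abs]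
    rintro (hαβ | hαβ) <;> simp only [α, β] at hαβ
    · exact hc0 (by linarith)
    · linarith
  have hQsq := eq_mul_sq_of_polar_eq_mul_mul hQ hQeven <|
    polar_eq_mul_mul_of_polarDefect_eq_zero hQ <|
      polarDefect_eq_zero_of_polar_mul_comm hQ hQ0 (div_ne_zero hβ hα) hr hpolar
  refine ⟨hQsq, fun x => ?_⟩
  rw [hP, hQsq, hQsq (β * x)]
  ring

end RealFunctionalEquations

section GroupVariable

variable {G : Type*} [AddCommGroup G]

theorem exists_add_eq_and_sub_eq (h2 : ∀ x : G, ∃ y, y + y = x) (u v : G) :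
    ∃ a₁ a₂, a₁ + a₂ = u ∧ a₁ - a₂ = v := by
  obtain ⟨y, hy⟩ := h2 (u + v)
  exact ⟨y, u - y, add_sub_cancel y u, by rw [sub_sub_eq_add_sub, hy, add_sub_cancel_left]⟩

theorem ZMod.exists_add_self_eq_of_odd {m : ℕ} (hodd : Odd m) (x : ZMod m) :
    ∃ y, y + y = x := by
  obtain ⟨u, hu⟩ : IsUnit (2 : ZMod m) := by
    simpa using (ZMod.isUnit_iff_coprime 2 m).mpr (Nat.coprime_two_left.mpr hodd)
  exact ⟨↑u⁻¹ * x, by rw [← two_mul, ← mul_assoc, ← hu, Units.mul_inv, one_mul]⟩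

variable {c : ℝ} {f₁ f₂ : ℝ → G → ℝ}

theorem heyde_fe_sub_eq_sub (h2 : ∀ x : G, ∃ y, y + y = x) (hcm1 : c ≠ -1)
    (h : ∀ s₁ s₂ a₁ a₂, f₁ (s₁ + s₂) (a₁ + a₂) + f₂ (s₁ + c * s₂) (a₁ - a₂) =
      f₁ (s₁ - s₂) (a₁ - a₂) + f₂ (s₁ - c * s₂) (a₁ + a₂))
    (x y : ℝ) (u v : G) : f₂ x v - f₂ x u = f₁ y v - f₁ y u := by
  have hfe : ∀ s₁ s₂ u v, f₁ (s₁ + s₂) u + f₂ (s₁ + c * s₂) v =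
      f₁ (s₁ - s₂) v + f₂ (s₁ - c * s₂) u := fun s₁ s₂ u v => by
    obtain ⟨a₁, a₂, rfl, rfl⟩ := exists_add_eq_and_sub_eq h2 u v
    exact h s₁ s₂ a₁ a₂
  obtain ⟨s, hx⟩ : ∃ s, y + s + c * s = x := ⟨(x - y) / (c + 1), by
    field_simp [show c + 1 ≠ 0 from fun h => hcm1 (by linarith)]
    ring⟩
  have hA := hfe (y + s) s u v
  have hB := hfe (y + s) s u u
  rw [hx, add_sub_cancel_right] at hA hB
  linarith

theorem heyde_fe_solution (h2 : ∀ x : G, ∃ y, y + y = x) (hc0 : c ≠ 0) (hc1 : c ≠ 1)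
    (hcm1 : c ≠ -1) (h₁ : f₁ 0 0 = 0) (h₂ : f₂ 0 0 = 0) (hcont : Continuous (f₂ · 0))
    (heven : ∀ s, f₂ (-s) 0 = f₂ s 0)
    (h : ∀ s₁ s₂ a₁ a₂, f₁ (s₁ + s₂) (a₁ + a₂) + f₂ (s₁ + c * s₂) (a₁ - a₂) =
      f₁ (s₁ - s₂) (a₁ - a₂) + f₂ (s₁ - c * s₂) (a₁ + a₂)) :
    ∃ σ₁ σ₂ : ℝ, σ₁ + c * σ₂ = 0 ∧ ∃ κ : G → ℝ, κ 0 = 0 ∧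
      (∀ s a, f₁ s a = -σ₁ * s ^ 2 + κ a) ∧ ∀ s a, f₂ s a = -σ₂ * s ^ 2 + κ a := by
  have hsep := heyde_fe_sub_eq_sub h2 hcm1 h
  obtain ⟨hQ, hP⟩ := heyde_fe_real_eq_mul_sq hc0 hc1 hcm1 (P := (f₁ · 0)) (Q := (f₂ · 0))
    h₁ h₂ hcont heven fun s₁ s₂ => by simpa using h s₁ s₂ 0 0
  refine ⟨c * f₂ 1 0, -f₂ 1 0, by ring, f₂ 0, h₂, fun s a => ?_, fun s a => ?_⟩
  · linarith [hsep 0 s 0 a, hP s]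
  · linarith [hsep s 0 0 a, hsep 0 0 0 a, hQ s]

end GroupVariable

theorem Complex.eq_exp_log_re {z : ℂ} (hz : z.im = 0 ∧ 0 < z.re) :
    z = exp (Real.log z.re) := by
  rw [← ofReal_exp, Real.exp_log hz.2]
  exact Complex.ext rfl hz.1

theorem Complex.log_re_mul {z w : ℂ} (hz : z.im = 0 ∧ 0 < z.re) (hw : w.im = 0 ∧ 0 < w.re) :
    Real.log (z * w).re = Real.log z.re + Real.log w.re := by
  rw [mul_re, hz.1, zero_mul, sub_zero, Real.log_mul hz.2.ne' hw.2.ne']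

section CharZM

variable {m : ℕ} (M : Measure (ℝ × ZMod m))

theorem charZM_zero_right (s : ℝ) : charZM m M s 0 = charFun M.fst s := by
  rw [Measure.fst, charFun_apply_real, integral_map measurable_fst.aemeasurable (by fun_prop)]
  simp only [charZM, mul_zero, ZMod.val_zero, CharP.cast_eq_zero, zero_div, exp_zero, mul_one]
  congr with p
  ring_nf

theorem log_re_charZM_neg (s : ℝ) :
    Real.log (charZM m M (-s) 0).re = Real.log (charZM m M s 0).re := by
  rw [charZM_zero_right, charZM_zero_right, charFun_neg, conj_re]

variable [IsProbabilityMeasure M]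

theorem log_re_charZM_zero_zero : Real.log (charZM m M 0 0).re = 0 := by
  simp [charZM_zero_right]

theorem log_re_charZM_zero_right_le_zero (s : ℝ) (hpos : 0 < (charZM m M s 0).re) :
    Real.log (charZM m M s 0).re ≤ 0 :=
  Real.log_nonpos hpos.le <|
    (re_le_norm _).trans <| charZM_zero_right M s ▸ norm_charFun_le_one s

theorem continuous_log_re_charZM_zero_right (hpos : ∀ s, 0 < (charZM m M s 0).re) :
    Continuous fun s => Real.log (charZM m M s 0).re := by
  simp only [charZM_zero_right] at hpos ⊢
  exact (continuous_re.comp continuous_charFun).log fun s => (hpos s).ne'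

theorem charZM_eq_exp_of_log_re_eq
    (hpos : ∀ s a, (charZM m M s a).im = 0 ∧ 0 < (charZM m M s a).re) {σ : ℝ}
    {κ : ZMod m → ℝ} (hκ0 : κ 0 = 0)
    (h : ∀ s a, Real.log (charZM m M s a).re = -σ * s ^ 2 + κ a) :
    0 ≤ σ ∧ ∀ s a, charZM m M s a = exp (-(σ : ℂ) * (s : ℂ) ^ 2 + (κ a : ℂ)) := by
  refine ⟨?_, fun s a => ?_⟩
  · have h1 := h 1 0
    rw [hκ0] at h1
    linarith [log_re_charZM_zero_right_le_zero M 1 (hpos 1 0).2]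
  · rw [eq_exp_log_re (hpos s a), h]
    push_cast
    ring

end CharZM

theorem heyde_equation_on_real_times_zmod_solution_general
    (m : ℕ) (hodd : Odd m)
    (c : ℝ) (hc0 : c ≠ 0) (hc1 : c ≠ 1) (hcm1 : c ≠ -1)
    (M₁ M₂ : Measure (ℝ × ZMod m)) [IsProbabilityMeasure M₁] [IsProbabilityMeasure M₂]
    (hpos₁ : ∀ (s : ℝ) (a : ZMod m), (charZM m M₁ s a).im = 0 ∧ 0 < (charZM m M₁ s a).re)
    (hpos₂ : ∀ (s : ℝ) (a : ZMod m), (charZM m M₂ s a).im = 0 ∧ 0 < (charZM m M₂ s a).re)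
    (heq : ∀ (s₁ s₂ : ℝ) (a₁ a₂ : ZMod m),
      charZM m M₁ (s₁ + s₂) (a₁ + a₂) * charZM m M₂ (s₁ + c * s₂) (a₁ - a₂) =
        charZM m M₁ (s₁ - s₂) (a₁ - a₂) * charZM m M₂ (s₁ - c * s₂) (a₁ + a₂)) :
    ∃ σ₁ σ₂ : ℝ, 0 ≤ σ₁ ∧ 0 ≤ σ₂ ∧ σ₁ + c * σ₂ = 0 ∧
      ∃ κ : ZMod m → ℝ, κ 0 = 0 ∧
        (∀ (s : ℝ) (a : ZMod m),
          charZM m M₁ s a = Complex.exp (-(σ₁ : ℂ) * (s : ℂ) ^ 2 + (κ a : ℂ))) ∧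
        (∀ (s : ℝ) (a : ZMod m),
          charZM m M₂ s a = Complex.exp (-(σ₂ : ℂ) * (s : ℂ) ^ 2 + (κ a : ℂ))) := by
  obtain ⟨σ₁, σ₂, hσ, κ, hκ0, h₁, h₂⟩ :=
    heyde_fe_solution (ZMod.exists_add_self_eq_of_odd hodd) hc0 hc1 hcm1
      (f₁ := fun s a => Real.log (charZM m M₁ s a).re)
      (f₂ := fun s a => Real.log (charZM m M₂ s a).re)
      (log_re_charZM_zero_zero M₁) (log_re_charZM_zero_zero M₂)
      (continuous_log_re_charZM_zero_right M₂ fun s => (hpos₂ s 0).2) (log_re_charZM_neg M₂)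
      fun s₁ s₂ a₁ a₂ => by
        simpa only [log_re_mul (hpos₁ _ _) (hpos₂ _ _)] using
          congrArg (fun z => Real.log z.re) (heq s₁ s₂ a₁ a₂)
  obtain ⟨hσ₁, hM₁⟩ := charZM_eq_exp_of_log_re_eq M₁ hpos₁ hκ0 h₁
  obtain ⟨hσ₂, hM₂⟩ := charZM_eq_exp_of_log_re_eq M₂ hpos₂ hκ0 h₂
  exact ⟨σ₁, σ₂, hσ₁, hσ₂, hσ, κ, hκ0, hM₁, hM₂⟩

theorem heyde_equation_on_real_times_zmod_solution
    (m : ℕ) (hm : 0 < m) (hodd : Odd m)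
    (c : ℝ) (hc0 : c ≠ 0) (hc1 : c ≠ 1) (hcm1 : c ≠ -1)
    (M₁ M₂ : Measure (ℝ × ZMod m)) [IsProbabilityMeasure M₁] [IsProbabilityMeasure M₂]
    (hpos₁ : ∀ (s : ℝ) (a : ZMod m), (charZM m M₁ s a).im = 0 ∧ 0 < (charZM m M₁ s a).re)
    (hpos₂ : ∀ (s : ℝ) (a : ZMod m), (charZM m M₂ s a).im = 0 ∧ 0 < (charZM m M₂ s a).re)
    (heq : ∀ (s₁ s₂ : ℝ) (a₁ a₂ : ZMod m),
      charZM m M₁ (s₁ + s₂) (a₁ + a₂) * charZM m M₂ (s₁ + c * s₂) (a₁ - a₂) =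
        charZM m M₁ (s₁ - s₂) (a₁ - a₂) * charZM m M₂ (s₁ - c * s₂) (a₁ + a₂)) :
    ∃ σ₁ σ₂ : ℝ, 0 ≤ σ₁ ∧ 0 ≤ σ₂ ∧ σ₁ + c * σ₂ = 0 ∧
      ∃ κ : ZMod m → ℝ, κ 0 = 0 ∧
        (∀ (s : ℝ) (a : ZMod m),
          charZM m M₁ s a = Complex.exp (-(σ₁ : ℂ) * (s : ℂ) ^ 2 + (κ a : ℂ))) ∧
        (∀ (s : ℝ) (a : ZMod m),
          charZM m M₂ s a = Complex.exp (-(σ₂ : ℂ) * (s : ℂ) ^ 2 + (κ a : ℂ))) :=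
  heyde_equation_on_real_times_zmod_solution_general m hodd c hc0 hc1 hcm1 M₁ M₂ hpos₁ hpos₂ heq
end
end
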